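/- Measurings of Ω-algebras compose: if (P, ψ) is a measuring of Ω-algebras from A to B and (P', ψ') is a measuring of Ω-algebras from B to C, then P' ⊗ P with the map ψ'' = ψ' ∘ (P' ⊗ ψ) : (P' ⊗ P) ⊗ A → C is a measuring of Ω-algebras from A to C. -/

import Mathlib

/-!
The key identity is that on pure tensors the extensions factor:
`ψ''ₙ(p' ⊗ p) = ψ'ₙ(p') ∘ ψₙ(p)`. This is an induction on `n`: the componentwise
comultiplication splits `δ''(p' ⊗ p)` into `δ'(p')` and `δ(p)`, and the extension to
`n + 1` factors is `ψ(p₍₁₎) ⊗ ψₙ(p₍₂₎)`, which composes factorwise. The measuring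
identities of `ψ` and `ψ'` then chain, and linearity in the coalgebra element extends
the result from pure tensors to all of `P' ⊗ P`.
-/

open TensorProduct PiTensorProduct

/-- The `n`-th tensor power of a module. -/
abbrev tpow (k : Type*) [CommSemiring k] (A : Type*) [AddCommMonoid A] [Module k A]
    (n : ℕ) : Type _ :=
  PiTensorProduct k (fun _ : Fin n => A)

section IteratedComul

variable {k P : Type*} [Field k] [AddCommGroup P] [Module k P]

/-- The canonical equivalence `P ⊗ P^{⊗n} ≅ P^{⊗(n+1)}`. -/
noncomputable def tpowSuccEquiv (n : ℕ) :
    (P ⊗[k] tpow k P n) ≃ₗ[k] tpow k P (n + 1) :=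
  (TensorProduct.congr
      (PiTensorProduct.subsingletonEquiv (0 : Fin 1) :
        tpow k P 1 ≃ₗ[k] P).symm
      (LinearEquiv.refl k (tpow k P n))).trans
    ((PiTensorProduct.tmulEquiv k P).trans
      (PiTensorProduct.reindex k (fun _ => P)
        (finSumFinEquiv.trans (finCongr (Nat.add_comm 1 n)))))

/-- The iterated comultiplication `δ⁽ⁿ⁾ : P → P^{⊗n}` of a coalgebra `(P, δ, ε)`. -/
noncomputable def deltaIter (δP : P →ₗ[k] P ⊗[k] P) (εP : P →ₗ[k] k) :
    (n : ℕ) → (P →ₗ[k] tpow k P n)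
  | 0 => (PiTensorProduct.isEmptyEquiv (Fin 0)).symm.toLinearMap ∘ₗ εP
  | (n + 1) =>
      (tpowSuccEquiv n).toLinearMap ∘ₗ
        (LinearMap.lTensor P (deltaIter δP εP n)) ∘ₗ δP

end IteratedComul

section Omega

variable {k : Type*} [Field k]

/-- An `Ω`-algebra structure: for each operation symbol `ω` with source arity `s ω` and
target arity `t ω`, a linear structure map `A^{⊗ s ω} → A^{⊗ t ω}`. -/
def OmegaStructure {Ω : Type*} (s t : Ω → ℕ) (k : Type*) [CommSemiring k]
    (A : Type*) [AddCommMonoid A] [Module k A] : Type _ :=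
  ∀ ω : Ω, tpow k A (s ω) →ₗ[k] tpow k A (t ω)

variable {Ω : Type*} {s t : Ω → ℕ}
variable {A B P : Type*} [AddCommGroup A] [Module k A] [AddCommGroup B] [Module k B]
  [AddCommGroup P] [Module k P]

/-- A linear map is a morphism of `Ω`-algebras when `f^{⊗ t ω} ∘ ω_A = ω_B ∘ f^{⊗ s ω}`
for every operation `ω`. -/
def IsOmegaHom (opsA : OmegaStructure s t k A) (opsB : OmegaStructure s t k B)
    (f : A →ₗ[k] B) : Prop :=
  ∀ ω : Ω,
    (PiTensorProduct.map (fun _ : Fin (t ω) => f)) ∘ₗ opsA ω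
      = opsB ω ∘ₗ (PiTensorProduct.map (fun _ : Fin (s ω) => f))

/-- The `n`-th extension `ψₙ(p ⊗ a₁ ⊗ ⋯ ⊗ aₙ) = p⁽¹⁾(a₁) ⊗ ⋯ ⊗ p⁽ⁿ⁾(aₙ)` of a
measuring map `ψ : P ⊗ A → B`. -/
noncomputable def measExt (δP : P →ₗ[k] P ⊗[k] P) (εP : P →ₗ[k] k)
    (ψ : P →ₗ[k] A →ₗ[k] B) (n : ℕ) (p : P) : tpow k A n →ₗ[k] tpow k B n :=
  PiTensorProduct.map₂ (fun _ : Fin n => ψ) (deltaIter δP εP n p)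

/-- A coalgebra `(P, δP, εP)` with `ψ : P ⊗ A → B` is a measuring of `Ω`-algebras when
`ψ_{t ω}(p ⊗ ω_A(a)) = ω_B(ψ_{s ω}(p ⊗ a))` for all `ω`, `p`, `a`. -/
def IsOmegaMeasuring (opsA : OmegaStructure s t k A) (opsB : OmegaStructure s t k B)
    (δP : P →ₗ[k] P ⊗[k] P) (εP : P →ₗ[k] k) (ψ : P →ₗ[k] A →ₗ[k] B) : Prop :=
  ∀ (ω : Ω) (p : P) (x : tpow k A (s ω)),
    measExt δP εP ψ (t ω) p (opsA ω x) = opsB ω (measExt δP εP ψ (s ω) p x)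

end Omega

section Composition

variable {k : Type*} [Field k] {Ω : Type*} {s t : Ω → ℕ}
variable {A B C P P' : Type*} [AddCommGroup A] [Module k A] [AddCommGroup B] [Module k B]
  [AddCommGroup C] [Module k C] [AddCommGroup P] [Module k P]
  [AddCommGroup P'] [Module k P']

/-- The componentwise comultiplication on the tensor product of two coalgebras. -/
noncomputable def tensorComul (δ' : P' →ₗ[k] P' ⊗[k] P') (δ : P →ₗ[k] P ⊗[k] P) :
    (P' ⊗[k] P) →ₗ[k] (P' ⊗[k] P) ⊗[k] (P' ⊗[k] P) :=
  (TensorProduct.tensorTensorTensorComm k P' P' P P).toLinearMap ∘ₗ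
    TensorProduct.map δ' δ

/-- The componentwise counit on the tensor product of two coalgebras. -/
noncomputable def tensorCounit (ε' : P' →ₗ[k] k) (ε : P →ₗ[k] k) :
    (P' ⊗[k] P) →ₗ[k] k :=
  (TensorProduct.lid k k).toLinearMap ∘ₗ TensorProduct.map ε' ε

/-- The composite measuring map `ψ''((p' ⊗ p) ⊗ a) = ψ'(p' ⊗ ψ(p ⊗ a))`. -/
noncomputable def measComp (ψ : P →ₗ[k] A →ₗ[k] B) (ψ' : P' →ₗ[k] B →ₗ[k] C) :
    (P' ⊗[k] P) →ₗ[k] A →ₗ[k] C :=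
  TensorProduct.lift (((LinearMap.llcomp k A B C).comp ψ').compl₂ ψ)

end Composition

section TensorPowers

variable {k : Type*} [Field k] {A B C P : Type*} [AddCommGroup A] [Module k A]
  [AddCommGroup B] [Module k B] [AddCommGroup C] [Module k C] [AddCommGroup P] [Module k P]

theorem tpowSuccEquiv_tmul_tprod (n : ℕ) (q : P) (a : Fin n → P) :
    tpowSuccEquiv (k := k) n (q ⊗ₜ PiTensorProduct.tprod k a) =
      PiTensorProduct.tprod k (Fin.cons q a) := by
  simp only [tpowSuccEquiv, LinearEquiv.trans_apply, TensorProduct.congr_tmul,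
    LinearEquiv.refl_apply, subsingletonEquiv_symm_apply', tmulEquiv_apply, reindex_tprod]
  congr 1
  funext i
  induction i using Fin.cases with
  | zero =>
    have : (finSumFinEquiv.trans (finCongr (Nat.add_comm 1 n))).symm 0 = Sum.inl 0 := by
      simp [Equiv.symm_apply_eq, Fin.ext_iff]
    rw [this]; rfl
  | succ j =>
    have : (finSumFinEquiv.trans (finCongr (Nat.add_comm 1 n))).symm j.succ = Sum.inr j := by
      simp [Equiv.symm_apply_eq, Fin.ext_iff, Nat.add_comm]
    rw [this]; rfl

theorem tpowSuccEquiv_symm_tprod (n : ℕ) (v : Fin (n + 1) → P) :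
    (tpowSuccEquiv (k := k) n).symm (PiTensorProduct.tprod k v) =
      v 0 ⊗ₜ PiTensorProduct.tprod k (Fin.tail v) := by
  rw [LinearEquiv.symm_apply_eq, tpowSuccEquiv_tmul_tprod, Fin.cons_self_tail]

/-- `f ⊗ g : A ⊗ A^{⊗n} → B ⊗ B^{⊗n}` read as a map `A^{⊗(n+1)} → B^{⊗(n+1)}`. -/
noncomputable def tpowSuccMap (n : ℕ) (f : A →ₗ[k] B) :
    (tpow k A n →ₗ[k] tpow k B n) →ₗ[k] tpow k A (n + 1) →ₗ[k] tpow k B (n + 1) :=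
  ((tpowSuccEquiv n).arrowCongr (tpowSuccEquiv n)).toLinearMap ∘ₗ
    TensorProduct.mapBilinear (RingHom.id k) A _ B _ f

theorem tpowSuccMap_comp (n : ℕ) (f : A →ₗ[k] B) (f' : B →ₗ[k] C)
    (g : tpow k A n →ₗ[k] tpow k B n) (g' : tpow k B n →ₗ[k] tpow k C n) :
    tpowSuccMap n (f' ∘ₗ f) (g' ∘ₗ g) = tpowSuccMap n f' g' ∘ₗ tpowSuccMap n f g := by
  simp only [tpowSuccMap, LinearMap.comp_apply, TensorProduct.mapBilinear_apply,
    TensorProduct.map_comp, LinearEquiv.coe_coe]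
  exact LinearEquiv.arrowCongr_comp _ (tpowSuccEquiv n) _ _ _

theorem map₂_tpowSuccEquiv_tmul (n : ℕ) (ψ : P →ₗ[k] A →ₗ[k] B) (q : P) (x : tpow k P n) :
    map₂ (fun _ ↦ ψ) (tpowSuccEquiv n (q ⊗ₜ x)) = tpowSuccMap n (ψ q) (map₂ (fun _ ↦ ψ) x) := by
  suffices map₂ (fun _ ↦ ψ) ∘ₗ (tpowSuccEquiv n).toLinearMap ∘ₗ TensorProduct.mk k P _ q =
      tpowSuccMap n (ψ q) ∘ₗ map₂ (fun _ ↦ ψ) from LinearMap.congr_fun this x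
  refine PiTensorProduct.ext (MultilinearMap.ext fun a ↦ ?_)
  refine PiTensorProduct.ext (MultilinearMap.ext fun v ↦ ?_)
  simp only [tpowSuccMap, LinearMap.compMultilinearMap_apply, LinearMap.comp_apply,
    LinearEquiv.coe_coe, TensorProduct.mk_apply, TensorProduct.mapBilinear_apply,
    LinearEquiv.arrowCongr_apply, tpowSuccEquiv_tmul_tprod, tpowSuccEquiv_symm_tprod,
    map₂_tprod_tprod, TensorProduct.map_tmul]
  congr 1
  funext i
  induction i using Fin.cases <;> rfl

noncomputable def tpowZeroEquiv : tpow k A 0 ≃ₗ[k] tpow k B 0 :=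
  (isEmptyEquiv (Fin 0)).trans (isEmptyEquiv (Fin 0)).symm

theorem tpowZeroEquiv_trans :
    (tpowZeroEquiv : tpow k A 0 ≃ₗ[k] tpow k B 0).trans (tpowZeroEquiv : _ ≃ₗ[k] tpow k C 0) =
      tpowZeroEquiv := by
  ext x
  simp [tpowZeroEquiv]

theorem map₂_tprod_fin_zero (ψ : P →ₗ[k] A →ₗ[k] B) (a : Fin 0 → P) :
    map₂ (fun _ ↦ ψ) (PiTensorProduct.tprod k a) =
      (tpowZeroEquiv : tpow k A 0 ≃ₗ[k] tpow k B 0).toLinearMap := by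
  refine PiTensorProduct.ext (MultilinearMap.ext fun v ↦ ?_)
  simp only [LinearMap.compMultilinearMap_apply, map₂_tprod_tprod, tpowZeroEquiv,
    LinearEquiv.coe_coe, LinearEquiv.trans_apply, isEmptyEquiv_apply_tprod,
    isEmptyEquiv_symm_apply, one_smul]
  exact congrArg _ (Subsingleton.elim _ _)

end TensorPowers

section Measuring

variable {k : Type*} [Field k] {A B P : Type*} [AddCommGroup A] [Module k A]
  [AddCommGroup B] [Module k B] [AddCommGroup P] [Module k P]
  (δ : P →ₗ[k] P ⊗[k] P) (ε : P →ₗ[k] k) (ψ : P →ₗ[k] A →ₗ[k] B)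

theorem measExt_zero (p : P) :
    measExt δ ε ψ 0 p = ε p • (tpowZeroEquiv : tpow k A 0 ≃ₗ[k] tpow k B 0).toLinearMap := by
  have : deltaIter δ ε 0 p = ε p • PiTensorProduct.tprod k isEmptyElim := by
    simp [deltaIter, isEmptyEquiv]
  rw [measExt, this, map_smul, map₂_tprod_fin_zero]

theorem measExt_succ (n : ℕ) (p : P) :
    measExt δ ε ψ (n + 1) p =
      map₂ (fun _ ↦ ψ) (tpowSuccEquiv n (LinearMap.lTensor P (deltaIter δ ε n) (δ p))) :=
  rfl

theorem measExt_add (n : ℕ) (p q : P) :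
    measExt δ ε ψ n (p + q) = measExt δ ε ψ n p + measExt δ ε ψ n q := by
  simp only [measExt, map_add]

end Measuring

section Composition

variable {k : Type*} [Field k] {Ω : Type*} {s t : Ω → ℕ}
variable {A B C P P' : Type*} [AddCommGroup A] [Module k A] [AddCommGroup B] [Module k B]
  [AddCommGroup C] [Module k C] [AddCommGroup P] [Module k P]
  [AddCommGroup P'] [Module k P']

theorem tensorComul_tmul (δ' : P' →ₗ[k] P' ⊗[k] P') (δ : P →ₗ[k] P ⊗[k] P) (p' : P') (p : P) :
    tensorComul δ' δ (p' ⊗ₜ p) = tensorTensorTensorComm k P' P' P P (δ' p' ⊗ₜ δ p) :=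
  rfl

theorem tensorCounit_tmul (ε' : P' →ₗ[k] k) (ε : P →ₗ[k] k) (p' : P') (p : P) :
    tensorCounit ε' ε (p' ⊗ₜ p) = ε' p' * ε p := by
  simp [tensorCounit]

theorem measComp_tmul (ψ : P →ₗ[k] A →ₗ[k] B) (ψ' : P' →ₗ[k] B →ₗ[k] C) (p' : P') (p : P) :
    measComp ψ ψ' (p' ⊗ₜ p) = ψ' p' ∘ₗ ψ p :=
  rfl

theorem measExt_tensorComul_tmul (δP : P →ₗ[k] P ⊗[k] P) (εP : P →ₗ[k] k)
    (δP' : P' →ₗ[k] P' ⊗[k] P') (εP' : P' →ₗ[k] k)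
    (ψ : P →ₗ[k] A →ₗ[k] B) (ψ' : P' →ₗ[k] B →ₗ[k] C) (n : ℕ) (p' : P') (p : P) :
    measExt (tensorComul δP' δP) (tensorCounit εP' εP) (measComp ψ ψ') n (p' ⊗ₜ p) =
      measExt δP' εP' ψ' n p' ∘ₗ measExt δP εP ψ n p := by
  induction n generalizing p' p with
  | zero =>
    simp only [measExt_zero, tensorCounit_tmul, LinearMap.smul_comp, LinearMap.comp_smul,
      ← LinearEquiv.coe_trans, tpowZeroEquiv_trans, smul_smul, mul_comm]
  | succ n ih =>
    simp only [measExt_succ, tensorComul_tmul]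
    generalize δP' p' = u, δP p = w
    induction u using TensorProduct.induction_on with
    | zero => simp
    | add u₁ u₂ h₁ h₂ => simp only [TensorProduct.add_tmul, map_add, LinearMap.add_comp, h₁, h₂]
    | tmul a b =>
      induction w using TensorProduct.induction_on with
      | zero => simp
      | add w₁ w₂ h₁ h₂ =>
        simp only [TensorProduct.tmul_add, map_add, LinearMap.comp_add, h₁, h₂]
      | tmul c d =>
        simp only [tensorTensorTensorComm_tmul, LinearMap.lTensor_tmul, map₂_tpowSuccEquiv_tmul,
          measComp_tmul, ← tpowSuccMap_comp]
        exact congrArg _ (ih b d)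

/-- Measurings of `Ω`-algebras compose: if `(P, ψ)` measures from `A` to `B` and
`(P', ψ')` measures from `B` to `C`, then `(P' ⊗ P, ψ'' = ψ' ∘ (P' ⊗ ψ))`, with the
tensor-product coalgebra structure, is a measuring of `Ω`-algebras from `A` to `C`. -/
theorem omegaMeasuring_comp
    (opsA : OmegaStructure s t k A) (opsB : OmegaStructure s t k B)
    (opsC : OmegaStructure s t k C)
    (δP : P →ₗ[k] P ⊗[k] P) (εP : P →ₗ[k] k)
    (δP' : P' →ₗ[k] P' ⊗[k] P') (εP' : P' →ₗ[k] k)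
    (ψ : P →ₗ[k] A →ₗ[k] B) (ψ' : P' →ₗ[k] B →ₗ[k] C)
    (hψ : IsOmegaMeasuring opsA opsB δP εP ψ)
    (hψ' : IsOmegaMeasuring opsB opsC δP' εP' ψ') :
    IsOmegaMeasuring opsA opsC (tensorComul δP' δP) (tensorCounit εP' εP)
      (measComp ψ ψ') := by
  intro ω z x
  induction z using TensorProduct.induction_on with
  | zero => simp [measExt]
  | add z₁ z₂ h₁ h₂ => simp only [measExt_add, LinearMap.add_apply, map_add, h₁, h₂]
  | tmul p' p =>
    rw [measExt_tensorComul_tmul, measExt_tensorComul_tmul, LinearMap.comp_apply,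
      LinearMap.comp_apply, hψ, hψ']

end Composition
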